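/- arXiv:2504.08639 — 2 statements merged into one kernel-verified Lean document; each statement's English description precedes it below -/
import Mathlib

section
/- Soundness: for any labelled Markov chain (X,ize L,τ,l), any states x,y ∈ X, and any rational ε ∈ [0,1], if the judgment x ⊢_ε y is derivable in the derivation system, then bd(x,y) ≥ ε. -/
/-- A finitely supported, rational-valued probability distribution on `X`. -/
structure FinDist (X : Type*) where
  p : X → ℝ
  nonneg : ∀ x, 0 ≤ p x
  rat : ∀ x, ∃ q : ℚ, (q : ℝ) = p x
  supp : Finset X
  mem_supp : ∀ x, x ∈ supp ↔ p x ≠ 0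
  sum_one : ∑ x ∈ supp, p x = 1

/-- A labelled Markov chain with states `X` and labels `L`. -/
structure LMC (X : Type*) (L : Type*) where
  τ : X → FinDist X
  label : X → L

/-- Expectation `μ ⊨ h = ∑ x, μ(x)·h(x)`. -/
noncomputable def expv {X : Type*} (μ : FinDist X) (h : X → ℝ) : ℝ :=
  ∑ z ∈ μ.supp, μ.p z * h z

/-- A `[0,1]`-valued pseudometric on `X`. -/
structure PMet (X : Type*) where
  d : X → X → ℝ
  nonneg : ∀ x y, 0 ≤ d x y
  le_one : ∀ x y, d x y ≤ 1
  refl : ∀ x, d x x = 0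
  symm : ∀ x y, d x y = d y x
  triangle : ∀ x y z, d x z ≤ d x y + d y z

open Classical in
/-- The functional `Γ` (on underlying distance functions). -/
noncomputable def GammaFun {X L : Type*} (M : LMC X L) (d : X → X → ℝ) : X → X → ℝ :=
  fun x y =>
    if M.label x ≠ M.label y then 1
    else sSup { r : ℝ | ∃ h : X → ℝ, (∀ z, h z ∈ Set.Icc (0:ℝ) 1) ∧
      (∀ u v, |h u - h v| ≤ d u v) ∧ r = expv (M.τ x) h - expv (M.τ y) h }

/-- The derivation system for lower bounds on behavioural distances. -/
inductive Deriv {X L : Type*} [DecidableEq X] (M : LMC X L) : X → ℚ → X → Prop where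
  | zero (x y : X) : Deriv M x 0 y
  | lab (x y : X) : M.label x ≠ M.label y → Deriv M x 1 y
  | symm {x y : X} {ε : ℚ} : Deriv M y ε x → Deriv M x ε y
  | weak {x y : X} {ε ε' : ℚ} : Deriv M x ε' y → 0 ≤ ε → ε ≤ ε' → Deriv M x ε y
  | exp {x y : X} {ε : ℚ} (h : X → ℚ) :
      0 ≤ ε →
      (∀ z ∈ (M.τ x).supp ∪ (M.τ y).supp, 0 ≤ h z ∧ h z ≤ 1) →
      (∀ x' ∈ (M.τ x).supp ∪ (M.τ y).supp, ∀ y' ∈ (M.τ x).supp ∪ (M.τ y).supp,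
        h y' < h x' → Deriv M x' (h x' - h y') y') →
      (ε : ℝ) ≤ expv (M.τ x) (fun z => ((h z : ℚ) : ℝ))
              - expv (M.τ y) (fun z => ((h z : ℚ) : ℝ)) →
      Deriv M x ε y

theorem FinDist.supp_nonempty {X : Type*} (μ : FinDist X) : μ.supp.Nonempty := by
  by_contra hne
  rw [Finset.not_nonempty_iff_eq_empty] at hne
  have := μ.sum_one
  rw [hne] at this
  simp at this

theorem expv_nonneg' {X : Type*} (μ : FinDist X) (h : X → ℝ)
    (h0 : ∀ z ∈ μ.supp, 0 ≤ h z) : 0 ≤ expv μ h :=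
  Finset.sum_nonneg fun z hz => mul_nonneg (μ.nonneg z) (h0 z hz)

theorem expv_le_one' {X : Type*} (μ : FinDist X) (h : X → ℝ)
    (h1 : ∀ z ∈ μ.supp, h z ≤ 1) : expv μ h ≤ 1 := by
  calc expv μ h ≤ ∑ z ∈ μ.supp, μ.p z * 1 :=
        Finset.sum_le_sum fun z hz => mul_le_mul_of_nonneg_left (h1 z hz) (μ.nonneg z)
    _ = 1 := by simp [μ.sum_one]

theorem min1_lip (a b : ℝ) : |min a 1 - min b 1| ≤ |a - b| := by
  rcases le_total a 1 with h|h <;> rcases le_total b 1 with h'|h' <;>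
    simp only [min_eq_left, min_eq_right, h, h'] <;>
    rw [abs_sub_le_iff] <;> constructor <;>
    linarith [abs_nonneg (a - b), le_abs_self (a - b), neg_abs_le (a - b)]

theorem sound_aux {X L : Type*} [DecidableEq X] (M : LMC X L) (bd : PMet X)
    (hfix : ∀ x y, GammaFun M bd.d x y = bd.d x y)
    {x y : X} {ε : ℚ} (hder : Deriv M x ε y) : (ε : ℝ) ≤ bd.d x y := by
  induction hder with
  | zero x y => simpa using bd.nonneg x y
  | lab x y hne =>
      have hh := hfix x y
      rw [GammaFun, if_pos hne] at hh
      simp [← hh]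
  | symm _ ih => rw [bd.symm]; exact ih
  | weak _ h0 hle ih => exact le_trans (by exact_mod_cast hle) ih
  | @exp x y ε h hε0 hbnd hd hexp ih =>
      set S := (M.τ x).supp ∪ (M.τ y).supp with hS
      have HS : S.Nonempty :=
        Finset.Nonempty.mono Finset.subset_union_left (M.τ x).supp_nonempty
      set H : X → ℝ := fun z => ((h z : ℚ) : ℝ) with hH
      set f : X → ℝ := fun z => S.inf' HS fun s => H s + bd.d z s with hf
      set g : X → ℝ := fun z => min (f z) 1 with hg
      -- bounds on g
      have hg01 : ∀ z, g z ∈ Set.Icc (0:ℝ) 1 := by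
        intro z
        refine ⟨le_min ?_ zero_le_one, min_le_right _ _⟩
        apply Finset.le_inf'
        intro s hs
        have := (hbnd s hs).1
        have hb := bd.nonneg z s
        have : (0:ℝ) ≤ H s := by simp only [hH]; exact_mod_cast this
        linarith
      -- one-sided Lipschitz for f
      have key : ∀ u v, f u - f v ≤ bd.d u v := by
        intro u v
        obtain ⟨s, hs, hsv⟩ := Finset.exists_mem_eq_inf' HS (fun s => H s + bd.d v s)
        have h1 : f u ≤ H s + bd.d u s := Finset.inf'_le _ hs
        have h2 : bd.d u s ≤ bd.d u v + bd.d v s := bd.triangle u v s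
        have : f v = H s + bd.d v s := hsv
        linarith
      have hglip : ∀ u v, |g u - g v| ≤ bd.d u v := by
        intro u v
        refine le_trans (min1_lip (f u) (f v)) ?_
        rw [abs_sub_le_iff]
        exact ⟨key u v, by rw [bd.symm]; exact key v u⟩
      -- g agrees with H on S
      have hgS : ∀ s ∈ S, g s = H s := by
        intro s hs
        have hHs1 : H s ≤ 1 := by simp only [hH]; exact_mod_cast (hbnd s hs).2
        have hfle : f s ≤ H s := by
          have : f s ≤ H s + bd.d s s := Finset.inf'_le _ hs
          rw [bd.refl] at this; linarith
        have hfge : H s ≤ f s := by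
          apply Finset.le_inf'
          intro s' hs'
          rcases lt_or_ge (h s') (h s) with hlt | hle
          · have := ih s hs s' hs' hlt
            have hc : (h s : ℝ) - (h s' : ℝ) ≤ bd.d s s' := by push_cast at this; linarith
            simp only [hH]; linarith
          · have : H s ≤ H s' := by simp only [hH]; exact_mod_cast hle
            have := bd.nonneg s s'
            linarith
        have : f s = H s := le_antisymm hfle hfge
        simp [hg, this, hHs1]
      have hexpg : ∀ μ : FinDist X, μ.supp ⊆ S → expv μ g = expv μ H := by
        intro μ hsub
        exact Finset.sum_congr rfl fun z hz => by rw [hgS z (hsub hz)]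
      -- bounded above
      have hbdd : BddAbove { r : ℝ | ∃ h : X → ℝ, (∀ z, h z ∈ Set.Icc (0:ℝ) 1) ∧
          (∀ u v, |h u - h v| ≤ bd.d u v) ∧ r = expv (M.τ x) h - expv (M.τ y) h } := by
        refine ⟨1, ?_⟩
        rintro r ⟨h', hIcc, _, rfl⟩
        have h1 := expv_le_one' (M.τ x) h' (fun z _ => (hIcc z).2)
        have h2 := expv_nonneg' (M.τ y) h' (fun z _ => (hIcc z).1)
        linarith
      have hmem : expv (M.τ x) g - expv (M.τ y) g ∈
          { r : ℝ | ∃ h : X → ℝ, (∀ z, h z ∈ Set.Icc (0:ℝ) 1) ∧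
          (∀ u v, |h u - h v| ≤ bd.d u v) ∧ r = expv (M.τ x) h - expv (M.τ y) h } :=
        ⟨g, hg01, hglip, rfl⟩
      have hεr : (ε : ℝ) ≤ expv (M.τ x) g - expv (M.τ y) g := by
        rw [hexpg (M.τ x) Finset.subset_union_left,
            hexpg (M.τ y) Finset.subset_union_right]
        exact hexp
      by_cases hlab : M.label x ≠ M.label y
      · have hh := hfix x y
        rw [GammaFun, if_pos hlab] at hh
        have h1 := expv_le_one' (M.τ x) H (fun z hz => by
          simp only [hH]; exact_mod_cast (hbnd z (Finset.mem_union_left _ hz)).2)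
        have h2 := expv_nonneg' (M.τ y) H (fun z hz => by
          simp only [hH]; exact_mod_cast (hbnd z (Finset.mem_union_right _ hz)).1)
        rw [← hh]
        linarith
      · have hh := hfix x y
        rw [GammaFun, if_neg hlab] at hh
        rw [← hh]
        exact le_trans hεr (le_csSup hbdd hmem)

/-- Soundness: derivable judgments give lower bounds on the behavioural distance. -/
theorem soundness {X L : Type*} [DecidableEq X] [Nonempty L] (M : LMC X L) (bd : PMet X)
    (hfix : ∀ x y, GammaFun M bd.d x y = bd.d x y)
    (hleast : ∀ d : PMet X, (∀ x y, GammaFun M d.d x y = d.d x y) →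
      ∀ x y, bd.d x y ≤ d.d x y)
    (x y : X) (ε : ℚ) (hε0 : 0 ≤ ε) (hε1 : ε ≤ 1)
    (hder : Deriv M x ε y) :
    (ε : ℝ) ≤ bd.d x y := by
  exact sound_aux M bd hfix hder
end

section
/- Consider the labelled Markov chain with state set X = {x, x₁, y}, labels L = {a, b}, labelling l(x) = l(y) = a, l(x₁) = b, and transitions τ(x) = ½·|x₁⟩ + ½·|x⟩, τ(x₁) = 1·|x₁⟩, τ(y) = 1·|y⟩. Then bd(x,y) = 1, while Γ^i(⊥)(x,y) = 1 − 2^{−(i−1)} for every i ≥ 1; in particular Γ^i(⊥)(x,y) < 1 for every natural number i, so the behavioural distance of x and y is reached only in the limit and not by any finite approximant. -/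
/-- Point mass distribution. -/
noncomputable def pointMass {X : Type*} [DecidableEq X] (a : X) : FinDist X where
  p := fun z => if z = a then 1 else 0
  nonneg := fun z => by (try dsimp only); split <;> norm_num
  rat := fun z => by
    (try dsimp only); split
    · exact ⟨1, by norm_num⟩
    · exact ⟨0, by norm_num⟩
  supp := {a}
  mem_supp := fun z => by simp
  sum_one := by simp

/-- Fair coin distribution over two distinct states. -/
noncomputable def halfHalf {X : Type*} [DecidableEq X] (a b : X) (hab : a ≠ b) : FinDist X where
  p := fun z => if z = a ∨ z = b then 1/2 else 0
  nonneg := fun z => by (try dsimp only); split <;> norm_num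
  rat := fun z => by
    (try dsimp only); split
    · exact ⟨1/2, by norm_num⟩
    · exact ⟨0, by norm_num⟩
  supp := {a, b}
  mem_supp := fun z => by
    simp only [Finset.mem_insert, Finset.mem_singleton]
    split <;> simp_all
  sum_one := by
    rw [Finset.sum_pair hab]
    norm_num


/-- The LMC of Example `noform`: `x = 0`, `x₁ = 1`, `y = 2`;
`l(x) = l(y) = false`, `l(x₁) = true`;
`τ(x) = ½|x₁⟩ + ½|x⟩`, `τ(x₁) = |x₁⟩`, `τ(y) = |y⟩`. -/
noncomputable def M15 : LMC (Fin 3) Bool where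
  τ := fun i => if i = 0 then halfHalf 1 0 (by decide) else pointMass i
  label := fun i => decide (i = 1)

/-!
On distance tables of this chain, `Γ` acts through the single entry `t = d(x, y)` as
`t ↦ (1 + t) / 2`: the optimal test is `d(·, y)`, since `x₁` is at distance `1` from `y`.
Iterating from `⊥` gives `Γ^(n+1)(⊥)(x, y) = 1 - 2⁻ⁿ`, whereas any fixed point, in particular
`bd`, has `t = (1 + t) / 2`, i.e. `t = 1`.
-/

section General

variable {X L : Type*}

theorem expv_const (μ : FinDist X) (c : ℝ) : expv μ (fun _ => c) = c := by
  rw [expv, ← Finset.sum_mul, μ.sum_one, one_mul]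

theorem expv_const_sub (μ : FinDist X) (c : ℝ) (h : X → ℝ) :
    expv μ (fun z => c - h z) = c - expv μ h := by
  simp only [expv, mul_sub, Finset.sum_sub_distrib, ← Finset.sum_mul, μ.sum_one, one_mul]

theorem expv_pointMass [DecidableEq X] (a : X) (h : X → ℝ) : expv (pointMass a) h = h a := by
  simp [expv, pointMass]

theorem expv_halfHalf [DecidableEq X] (a b : X) (hab : a ≠ b) (h : X → ℝ) :
    expv (halfHalf a b hab) h = (h a + h b) / 2 := by
  simp [expv, halfHalf, Finset.sum_pair hab]
  ring

theorem PMet.abs_d_sub_d_le (d : PMet X) (u v w : X) : |d.d u w - d.d v w| ≤ d.d u v := by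
  rw [abs_sub_le_iff]
  constructor
  · linarith [d.triangle u v w]
  · linarith [d.triangle v u w, d.symm u v]

theorem GammaFun_of_label_ne (M : LMC X L) (d : X → X → ℝ) {x y : X}
    (hxy : M.label x ≠ M.label y) : GammaFun M d x y = 1 := by
  rw [GammaFun, if_pos hxy]

theorem GammaFun_eq_of_forall_le (M : LMC X L) (d : X → X → ℝ) {x y : X} {c : ℝ}
    (hxy : M.label x = M.label y) (h₀ : X → ℝ) (h₀_mem : ∀ z, h₀ z ∈ Set.Icc (0 : ℝ) 1)
    (h₀_lip : ∀ u v, |h₀ u - h₀ v| ≤ d u v)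
    (h₀_gap : expv (M.τ x) h₀ - expv (M.τ y) h₀ = c)
    (le_c : ∀ h : X → ℝ, (∀ z, h z ∈ Set.Icc (0 : ℝ) 1) → (∀ u v, |h u - h v| ≤ d u v) →
      expv (M.τ x) h - expv (M.τ y) h ≤ c) :
    GammaFun M d x y = c := by
  rw [GammaFun, if_neg (not_not.2 hxy)]
  refine IsGreatest.csSup_eq ⟨⟨h₀, h₀_mem, h₀_lip, h₀_gap.symm⟩, ?_⟩
  rintro r ⟨h, h_mem, h_lip, rfl⟩
  exact le_c h h_mem h_lip

theorem GammaFun_self (M : LMC X L) {d : X → X → ℝ} (hd : ∀ u v, 0 ≤ d u v) (x : X) :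
    GammaFun M d x x = 0 :=
  GammaFun_eq_of_forall_le M d rfl 0 (fun _ => ⟨le_rfl, zero_le_one⟩)
    (fun u v => by simpa using hd u v) (sub_self _) (fun h _ _ => (sub_self _).le)

theorem GammaFun_zero_of_label_eq (M : LMC X L) {x y : X} (hxy : M.label x = M.label y) :
    GammaFun M (fun _ _ => 0) x y = 0 := by
  refine GammaFun_eq_of_forall_le M _ hxy (fun _ => 0) (fun _ => ⟨le_rfl, zero_le_one⟩)
    (by simp) (by rw [expv_const, expv_const, sub_self]) fun h _ h_lip => ?_
  have h_const : h = fun _ => h x := funext fun z => sub_eq_zero.1 (abs_nonpos_iff.1 (h_lip z x))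
  rw [h_const, expv_const, expv_const, sub_self]

-- `h ↦ 1 - h` preserves nonexpansive tests and negates expectation gaps.
theorem GammaFun_comm (M : LMC X L) (d : X → X → ℝ) (x y : X) :
    GammaFun M d y x = GammaFun M d x y := by
  unfold GammaFun
  by_cases hxy : M.label x = M.label y
  · rw [if_neg (not_not.2 hxy.symm), if_neg (not_not.2 hxy)]
    congr 1
    ext r
    constructor <;> rintro ⟨h, h_mem, h_lip, rfl⟩ <;>
      refine ⟨fun z => 1 - h z, fun z => ⟨?_, ?_⟩, fun u v => ?_, ?_⟩
    all_goals first
      | (dsimp only; linarith [(h_mem z).1, (h_mem z).2])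
      | (rw [sub_sub_sub_cancel_left, abs_sub_comm]; exact h_lip u v)
      | (rw [expv_const_sub, expv_const_sub]; ring)
  · rw [if_pos (Ne.symm hxy), if_pos hxy]

end General

theorem expv_M15_τ_zero (h : Fin 3 → ℝ) : expv (M15.τ 0) h = (h 1 + h 0) / 2 :=
  expv_halfHalf 1 0 (by decide) h

theorem expv_M15_τ_two (h : Fin 3 → ℝ) : expv (M15.τ 2) h = h 2 :=
  expv_pointMass 2 h

-- The test `d(·, 2)` is optimal: `h 1 ≤ 1`, `h 0 - h 2 ≤ d 0 2` and `h 2 ≥ 0`.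
theorem GammaFun_M15_zero_two (d : PMet (Fin 3)) (h12 : d.d 1 2 = 1) :
    GammaFun M15 d.d 0 2 = (1 + d.d 0 2) / 2 := by
  refine GammaFun_eq_of_forall_le M15 d.d rfl (fun z => d.d z 2)
    (fun z => ⟨d.nonneg z 2, d.le_one z 2⟩) (fun u v => d.abs_d_sub_d_le u v 2) ?_ ?_
  · rw [expv_M15_τ_zero, expv_M15_τ_two, h12, d.refl]
    ring
  · intro h h_mem h_lip
    rw [expv_M15_τ_zero, expv_M15_τ_two]
    linarith [(h_mem 1).2, (h_mem 2).1, (abs_le.1 (h_lip 0 2)).2]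

def tableDist (a : ℝ) : Fin 3 → Fin 3 → ℝ := ![![0, 1, a], ![1, 0, 1], ![a, 1, 0]]

def tablePMet (a : ℝ) (ha₀ : 0 ≤ a) (ha₁ : a ≤ 1) : PMet (Fin 3) where
  d := tableDist a
  nonneg x y := by fin_cases x <;> fin_cases y <;> simp [tableDist, ha₀]
  le_one x y := by fin_cases x <;> fin_cases y <;> simp [tableDist, ha₁]
  refl x := by fin_cases x <;> rfl
  symm x y := by fin_cases x <;> fin_cases y <;> rfl
  triangle x y z := by
    fin_cases x <;> fin_cases y <;> fin_cases z <;> simp [tableDist] <;> linarith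

theorem GammaFun_M15_tableDist (a : ℝ) (ha₀ : 0 ≤ a) (ha₁ : a ≤ 1) :
    GammaFun M15 (tableDist a) = tableDist ((1 + a) / 2) := by
  have h02 := GammaFun_M15_zero_two (tablePMet a ha₀ ha₁) rfl
  funext u v
  fin_cases u <;> fin_cases v
  all_goals first
    | exact (GammaFun_self M15 (tablePMet a ha₀ ha₁).nonneg _).trans rfl
    | exact (GammaFun_of_label_ne M15 _ (by decide)).trans rfl
    | exact h02
    | exact (GammaFun_comm M15 _ 0 2).trans h02

theorem GammaFun_M15_zero : GammaFun M15 (fun _ _ => 0) = tableDist 0 := by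
  funext u v
  fin_cases u <;> fin_cases v
  all_goals first
    | exact (GammaFun_zero_of_label_eq M15 (by decide)).trans rfl
    | exact (GammaFun_of_label_ne M15 _ (by decide)).trans rfl

theorem iterate_GammaFun_M15_zero (n : ℕ) :
    (GammaFun M15)^[n + 1] (fun _ _ => 0) = tableDist (1 - (1 / 2 : ℝ) ^ n) := by
  induction n with
  | zero => simpa using GammaFun_M15_zero
  | succ n ih =>
    have h_le : (1 / 2 : ℝ) ^ n ≤ 1 := pow_le_one₀ (by norm_num) (by norm_num)
    have h_nonneg : 0 ≤ (1 / 2 : ℝ) ^ n := by positivity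
    rw [Function.iterate_succ_apply', ih,
      GammaFun_M15_tableDist _ (by linarith) (by linarith)]
    congr 1
    ring

theorem bd_not_attained_general (bd : PMet (Fin 3))
    (hfix : ∀ x y, GammaFun M15 bd.d x y = bd.d x y) :
    bd.d 0 2 = 1 ∧
    (∀ i : ℕ, 1 ≤ i →
      (GammaFun M15)^[i] (fun _ _ => 0) 0 2 = 1 - (1/2 : ℝ) ^ (i - 1)) ∧
    (∀ i : ℕ, (GammaFun M15)^[i] (fun _ _ => 0) 0 2 < 1) := by
  have approx : ∀ n : ℕ, (GammaFun M15)^[n + 1] (fun _ _ => 0) 0 2 = 1 - (1 / 2 : ℝ) ^ n :=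
    fun n => congrFun (congrFun (iterate_GammaFun_M15_zero n) 0) 2
  refine ⟨?_, ?_, ?_⟩
  · have h12 : bd.d 1 2 = 1 := (hfix 1 2).symm.trans (GammaFun_of_label_ne M15 _ (by decide))
    have h02 := GammaFun_M15_zero_two bd h12
    rw [hfix] at h02
    linarith
  · rintro (_ | n) hn
    · omega
    · exact approx n
  · rintro (_ | n)
    · norm_num
    · rw [approx]
      linarith [pow_pos (by norm_num : (0 : ℝ) < 1 / 2) n]

/-- `bd(x,y) = 1` but each finite approximant satisfies
`Γ^i(⊥)(x,y) = 1 − 2^{-(i−1)} < 1`. -/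
theorem bd_not_attained (bd : PMet (Fin 3))
    (hfix : ∀ x y, GammaFun M15 bd.d x y = bd.d x y)
    (hleast : ∀ d : PMet (Fin 3), (∀ x y, GammaFun M15 d.d x y = d.d x y) →
      ∀ x y, bd.d x y ≤ d.d x y) :
    bd.d 0 2 = 1 ∧
    (∀ i : ℕ, 1 ≤ i →
      (GammaFun M15)^[i] (fun _ _ => 0) 0 2 = 1 - (1/2 : ℝ) ^ (i - 1)) ∧
    (∀ i : ℕ, (GammaFun M15)^[i] (fun _ _ => 0) 0 2 < 1) :=
  bd_not_attained_general bd hfix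
end
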